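/- arXiv:1411.7630 — 2 statements merged into one kernel-verified Lean document; each statement's English description precedes it below -/
import Mathlib

section
/- Let λ ∈ {±1}ⁿ be any Golay sequence, Λ = diag(λ), and F the n × n normalized DFT matrix. Then the coherence satisfies μ(F Λ F*) ≤ √(2/n), i.e., every entry of the matrix F Λ F* has absolute value at most √(2/n). -/
/-!
Conjugating `diag(λ)` by the DFT gives a matrix whose `(j, k)` entry is `A(z) / n`, where `A` is
the generating polynomial of `λ` and `z = e^{2πi(k-j)/n}` lies on the unit circle. The Golay
identity `|A(z)|² + |B(z)|² = 2n` gives `|A(z)| ≤ √(2n)`, hence every entry is at most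
`√(2n) / n = √(2/n)` in absolute value.
-/

open MeasureTheory ProbabilityTheory Matrix
open scoped BigOperators

noncomputable section

/-- Squared ℓ² norm of a complex vector. -/
def l2normSq {n : ℕ} (x : Fin n → ℂ) : ℝ := ∑ i, ‖x i‖ ^ 2

/-- `x` has at most `s` nonzero entries. -/
def SparseLe {n : ℕ} (s : ℕ) (x : Fin n → ℂ) : Prop :=
  (Finset.univ.filter fun i => x i ≠ 0).card ≤ s

/-- The restricted isometry constant of order `s` of `A` is at most `δ`. -/
def RIPLe {m n : ℕ} (A : Matrix (Fin m) (Fin n) ℂ) (s : ℕ) (δ : ℝ) : Prop :=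
  ∀ x : Fin n → ℂ, SparseLe s x →
    (1 - δ) * l2normSq x ≤ l2normSq (A.mulVec x) ∧
    l2normSq (A.mulVec x) ≤ (1 + δ) * l2normSq x

/-- The coherence of a matrix: the maximum absolute value of its entries. -/
def coherence {m n : ℕ} (A : Matrix (Fin m) (Fin n) ℂ) : ℝ :=
  ⨆ j : Fin m, ⨆ k : Fin n, ‖A j k‖

/-- A unit-norm tight frame: `m ≤ n`, unit-norm columns, and `V Vᴴ = (n/m) I`. -/
def IsUTF {m n : ℕ} (V : Matrix (Fin m) (Fin n) ℂ) : Prop :=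
  m ≤ n ∧ (∀ k, ∑ j, ‖V j k‖ ^ 2 = 1) ∧
    V * V.conjTranspose = ((n : ℂ) / (m : ℂ)) • 1

/-- A real random variable is `r`-subgaussian. -/
def IsSubgaussian {Ω : Type*} [MeasurableSpace Ω] (μ : Measure Ω) (r : ℝ) (X : Ω → ℝ) : Prop :=
  ∀ t : ℝ, ∫ ω, Real.exp (t * X ω) ∂μ ≤ Real.exp (r ^ 2 * t ^ 2 / 2)

/-- A random vector with independent, zero-mean, unit-variance, `r`-subgaussian entries. -/
def IsSubgaussianVec {Ω : Type*} [MeasurableSpace Ω] (μ : Measure Ω) (r : ℝ) {n : ℕ}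
    (ξ : Ω → Fin n → ℝ) : Prop :=
  iIndepFun (fun i ω => ξ ω i) μ ∧
  (∀ i, Measurable fun ω => ξ ω i) ∧
  (∀ i, ∫ ω, ξ ω i ∂μ = 0) ∧
  (∀ i, ∫ ω, (ξ ω i) ^ 2 ∂μ = 1) ∧
  (∀ i, IsSubgaussian μ r fun ω => ξ ω i)

/-- A Rademacher random vector: independent entries, uniform on `{1, -1}`. -/
def IsRademacherVec {Ω : Type*} [MeasurableSpace Ω] (μ : Measure Ω) {n : ℕ}
    (ξ : Ω → Fin n → ℝ) : Prop :=
  iIndepFun (fun i ω => ξ ω i) μ ∧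
  (∀ i, Measurable fun ω => ξ ω i) ∧
  (∀ i, μ {ω | ξ ω i = 1} = 1/2 ∧ μ {ω | ξ ω i = -1} = 1/2)

/-- The normalized `n × n` DFT matrix. -/
def DFT (n : ℕ) : Matrix (Fin n) (Fin n) ℂ :=
  fun j k => ((1 / Real.sqrt n : ℝ) : ℂ) *
    Complex.exp (-2 * Real.pi * Complex.I * ((j : ℕ) : ℂ) * ((k : ℕ) : ℂ) / (n : ℂ))

/-- The failure probability `n ^ (−(log n)(log s)²)`. -/
def failProb (n s : ℕ) : ℝ := (n : ℝ) ^ (-(Real.log n) * (Real.log s) ^ 2)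

/-- `a` is a Golay sequence: a `±1` sequence admitting a complementary `±1` sequence `b`
with `|A(z)|² + |B(z)|² = 2n` on the unit circle. -/
def IsGolay {n : ℕ} (a : Fin n → ℝ) : Prop :=
  (∀ k, a k = 1 ∨ a k = -1) ∧
  ∃ b : Fin n → ℝ, (∀ k, b k = 1 ∨ b k = -1) ∧
    ∀ z : ℂ, ‖z‖ = 1 →
      ‖∑ k, (a k : ℂ) * z ^ (k : ℕ)‖ ^ 2 +
      ‖∑ k, (b k : ℂ) * z ^ (k : ℕ)‖ ^ 2 = 2 * n

/-- The matrix `P₁ = I_m ⊗ 1_qᵀ`. -/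
def P1 (m q : ℕ) : Matrix (Fin m) (Fin (m * q)) ℂ :=
  fun j k => if (k : ℕ) / q = (j : ℕ) then 1 else 0

theorem IsGolay.norm_sum_le {n : ℕ} {a : Fin n → ℝ} (ha : IsGolay a) {z : ℂ} (hz : ‖z‖ = 1) :
    ‖∑ k, (a k : ℂ) * z ^ (k : ℕ)‖ ≤ √(2 * n) := by
  obtain ⟨-, b, -, hab⟩ := ha
  apply Real.le_sqrt_of_sq_le
  linarith [hab z hz, sq_nonneg ‖∑ k, (b k : ℂ) * z ^ (k : ℕ)‖]

theorem DFT_mul_diagonal_mul_conjTranspose_apply {n : ℕ} (d : Fin n → ℂ) (j k : Fin n) :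
    (DFT n * diagonal d * (DFT n)ᴴ) j k =
      (n : ℂ)⁻¹ * ∑ i, d i *
        Complex.exp (2 * Real.pi * Complex.I * (((k : ℕ) : ℂ) - (j : ℕ)) / n) ^ (i : ℕ) := by
  rw [mul_apply, Finset.mul_sum]
  refine Finset.sum_congr rfl fun i _ => ?_
  simp only [mul_diagonal, conjTranspose_apply, DFT, Complex.star_def, map_mul,
    Complex.conj_ofReal, ← Complex.exp_conj, ← Complex.exp_nat_mul]
  have hscale : ((1 / √n : ℝ) : ℂ) * ((1 / √n : ℝ) : ℂ) = (n : ℂ)⁻¹ := by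
    rw [← Complex.ofReal_mul, div_mul_div_comm, one_mul, Real.mul_self_sqrt n.cast_nonneg]
    push_cast
    exact one_div _
  have hexp : Complex.exp (-2 * Real.pi * Complex.I * ((j : ℕ) : ℂ) * ((i : ℕ) : ℂ) / n) *
      Complex.exp ((starRingEnd ℂ) (-2 * Real.pi * Complex.I * ((k : ℕ) : ℂ) * ((i : ℕ) : ℂ) / n)) =
      Complex.exp ((i : ℕ) * (2 * Real.pi * Complex.I * (((k : ℕ) : ℂ) - (j : ℕ)) / n)) := by
    rw [← Complex.exp_add]
    congr 1
    simp only [map_div₀, map_mul, map_neg, map_ofNat, map_natCast, Complex.conj_ofReal,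
      Complex.conj_I]
    ring
  rw [← hscale, ← hexp]
  ring

theorem Real.inv_mul_sqrt_two_mul (x : ℝ) : x⁻¹ * √(2 * x) = √(2 / x) := by
  rcases le_or_gt x 0 with hx | hx
  · rw [Real.sqrt_eq_zero'.2 (by linarith),
      Real.sqrt_eq_zero'.2 (div_nonpos_of_nonneg_of_nonpos zero_le_two hx), mul_zero]
  · rw [Real.sqrt_mul zero_le_two, Real.sqrt_div zero_le_two]
    field_simp
    rw [Real.sq_sqrt hx.le]

theorem golay_coherence_fourier_general (n : ℕ) (lam : Fin n → ℝ) (hlam : IsGolay lam) :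
    ∀ (j k : Fin n),
      ‖(DFT n * Matrix.diagonal (fun i => ((lam i : ℝ) : ℂ)) *
        (DFT n).conjTranspose) j k‖ ≤ Real.sqrt (2 / n) := by
  intro j k
  rw [DFT_mul_diagonal_mul_conjTranspose_apply, norm_mul, norm_inv, Complex.norm_natCast,
    ← Real.inv_mul_sqrt_two_mul]
  gcongr
  exact hlam.norm_sum_le (by simp [Complex.norm_exp])

/-- coherence bound `μ(F Λ F*) ≤ √(2/n)` for a Golay modulation `Λ`. -/
theorem golay_coherence_fourier (n : ℕ) (hn : 0 < n) (lam : Fin n → ℝ) (hlam : IsGolay lam) :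
    ∀ (j k : Fin n),
      ‖(DFT n * Matrix.diagonal (fun i => ((lam i : ℝ) : ℂ)) *
        (DFT n).conjTranspose) j k‖ ≤ Real.sqrt (2 / n) :=
  golay_coherence_fourier_general n lam hlam
end
end

section
/- Let n = 2^d, let λ ∈ {±1}ⁿ be the Golay sequence produced by the Rudin–Shapiro iterative process, Λ = diag(λ), F the n × n normalized DFT matrix, and W* the n × n orthonormal Haar wavelet matrix defined recursively by W₁* = [1] and W_{2^{l+1}}* = (1/√2) [ W_{2^l}* ⊗ (1,1)^T , I_{2^l} ⊗ (1,−1)^T ]. Then the coherence satisfies μ(F Λ W*) ≤ √(2/n). -/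
open MeasureTheory ProbabilityTheory Matrix
open scoped BigOperators

noncomputable section

/-- The Rudin–Shapiro iterative process: `(rsPQ d).1` and `(rsPQ d).2` are the complementary
pair `(P_d, Q_d)` of `±1` sequences of length `2^d` (indexed by `ℕ`, junk values beyond). -/
def rsPQ : ℕ → (ℕ → ℤ) × (ℕ → ℤ)
  | 0 => (fun _ => 1, fun _ => 1)
  | d + 1 =>
      ((fun k => if k < 2 ^ d then (rsPQ d).1 k else (rsPQ d).2 (k - 2 ^ d)),
       (fun k => if k < 2 ^ d then (rsPQ d).1 k else -((rsPQ d).2 (k - 2 ^ d))))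

/-- The Rudin–Shapiro (Golay) sequence of length `2^d`. -/
def rudinShapiro (d : ℕ) : ℕ → ℤ := (rsPQ d).1

/-- The (transposed) orthonormal Haar wavelet matrix `W*` of size `2^l × 2^l`, defined by the
recursion `W₁* = [1]`, `W_{2^{l+1}}* = (1/√2) [ W_{2^l}* ⊗ (1,1)ᵀ , I_{2^l} ⊗ (1,−1)ᵀ ]`
(entries indexed by `ℕ`, junk values beyond `2^l`). -/
noncomputable def haarT : ℕ → ℕ → ℕ → ℝ
  | 0, _, _ => 1
  | l + 1, r, c =>
      if c < 2 ^ l then (1 / Real.sqrt 2) * haarT l (r / 2) c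
      else if r / 2 = c - 2 ^ l then
        (1 / Real.sqrt 2) * (if r % 2 = 0 then 1 else -1)
      else 0

/-- The Haar matrix `W*` of size `2^d`, as a complex matrix. -/
noncomputable def haarMatrix (d : ℕ) : Matrix (Fin (2 ^ d)) (Fin (2 ^ d)) ℂ :=
  fun r c => ((haarT d (r : ℕ) (c : ℕ) : ℝ) : ℂ)

/-!
On a column of `W*` the entry of `F Λ W*` in row `j` is `n^{-1/2} ∑ᵤ λᵤ W*ᵤₖ zᵘ` with
`z = e^{-2πij/n}` on the unit circle. The constant column gives `n^{-1/2} 2^{-d/2} P_d(z)`. Every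
other column is a Haar wavelet supported on a dyadic block of length `2^(m+1)`, equal to
`±2^{-(m+1)/2}` on its two halves. On such a block the Rudin–Shapiro sequence is `±P_{m+1}` or
`±Q_{m+1}`, and flipping the sign of the second half exchanges `P_{m+1}` and `Q_{m+1}`; so the
entry is `n^{-1/2} 2^{-(m+1)/2}` times the value of one of `P_{m+1}, Q_{m+1}` at a point of the
unit circle. The Golay identity `|P_l(z)|² + |Q_l(z)|² = 2^(l+1)` bounds both by `2^{(l+1)/2}`.
-/

open Finset

lemma sum_range_eq_sum_block {M : Type*} [AddCommMonoid M] {f : ℕ → M} {N B t : ℕ}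
    (hB : 0 < B) (hN : (t + 1) * B ≤ N) (hf : ∀ u, u / B ≠ t → f u = 0) :
    ∑ u ∈ range N, f u = ∑ v ∈ range B, f (t * B + v) := by
  have hIco : ∑ v ∈ range B, f (t * B + v) = ∑ u ∈ Ico (t * B) (t * B + B), f u := by
    rw [sum_Ico_eq_sum_range, Nat.add_sub_cancel_left]
  rw [hIco]
  refine (sum_subset (fun u hu => ?_) fun u _ hu => hf u fun hut => hu ?_).symm
  · simp only [mem_Ico, mem_range] at hu ⊢
    nlinarith
  · rw [Nat.div_eq_iff hB] at hut
    simp only [mem_Ico]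
    omega

section RudinShapiro

variable {d m : ℕ}

lemma rsPQ_succ_fst_of_lt {k : ℕ} (hk : k < 2 ^ d) : (rsPQ (d + 1)).1 k = (rsPQ d).1 k := by
  simp [rsPQ, hk]

lemma rsPQ_succ_snd_of_lt {k : ℕ} (hk : k < 2 ^ d) : (rsPQ (d + 1)).2 k = (rsPQ d).1 k := by
  simp [rsPQ, hk]

lemma rsPQ_succ_fst_add (k : ℕ) : (rsPQ (d + 1)).1 (2 ^ d + k) = (rsPQ d).2 k := by
  simp [rsPQ]

lemma rsPQ_succ_snd_add (k : ℕ) : (rsPQ (d + 1)).2 (2 ^ d + k) = -(rsPQ d).2 k := by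
  simp [rsPQ]

def rsPolyP (m : ℕ) (z : ℂ) : ℂ := ∑ u ∈ range (2 ^ m), ((rsPQ m).1 u : ℂ) * z ^ u

def rsPolyQ (m : ℕ) (z : ℂ) : ℂ := ∑ u ∈ range (2 ^ m), ((rsPQ m).2 u : ℂ) * z ^ u

lemma rsPolyP_succ (z : ℂ) : rsPolyP (m + 1) z = rsPolyP m z + z ^ 2 ^ m * rsPolyQ m z := by
  rw [rsPolyP, pow_succ, mul_two, sum_range_add, rsPolyQ, mul_sum]
  congr 1
  · exact sum_congr rfl fun u hu => by rw [rsPQ_succ_fst_of_lt (mem_range.mp hu)]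
  · exact sum_congr rfl fun u _ => by rw [rsPQ_succ_fst_add, pow_add]; ring

lemma rsPolyQ_succ (z : ℂ) : rsPolyQ (m + 1) z = rsPolyP m z - z ^ 2 ^ m * rsPolyQ m z := by
  rw [rsPolyQ, pow_succ, mul_two, sum_range_add, rsPolyQ, mul_sum, sub_eq_add_neg,
    ← sum_neg_distrib]
  congr 1
  · exact sum_congr rfl fun u hu => by rw [rsPQ_succ_snd_of_lt (mem_range.mp hu)]
  · exact sum_congr rfl fun u _ => by rw [rsPQ_succ_snd_add, pow_add]; push_cast; ring

theorem norm_rsPolyP_sq_add_norm_rsPolyQ_sq {z : ℂ} (hz : ‖z‖ = 1) (m : ℕ) :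
    ‖rsPolyP m z‖ ^ 2 + ‖rsPolyQ m z‖ ^ 2 = 2 ^ (m + 1) := by
  induction m with
  | zero => norm_num [rsPolyP, rsPolyQ, rsPQ]
  | succ m ih =>
    have hshift : ‖z ^ 2 ^ m * rsPolyQ m z‖ = ‖rsPolyQ m z‖ := by simp [hz]
    rw [rsPolyP_succ, rsPolyQ_succ, parallelogram_law_with_norm ℝ, hshift, ih, pow_succ _ (m + 1)]
    ring

lemma le_sqrt_two_pow_of_sq_add_sq {a b : ℝ} (hab : a ^ 2 + b ^ 2 = 2 ^ (m + 1)) :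
    a ≤ Real.sqrt 2 ^ (m + 1) := by
  refine le_of_pow_le_pow_left₀ two_ne_zero (by positivity) ?_
  rw [← pow_mul, mul_comm, pow_mul, Real.sq_sqrt zero_le_two]
  nlinarith [sq_nonneg b]

lemma norm_rsPolyP_le {z : ℂ} (hz : ‖z‖ = 1) (m : ℕ) : ‖rsPolyP m z‖ ≤ Real.sqrt 2 ^ (m + 1) :=
  le_sqrt_two_pow_of_sq_add_sq (norm_rsPolyP_sq_add_norm_rsPolyQ_sq hz m)

lemma norm_rsPolyQ_le {z : ℂ} (hz : ‖z‖ = 1) (m : ℕ) : ‖rsPolyQ m z‖ ≤ Real.sqrt 2 ^ (m + 1) :=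
  le_sqrt_two_pow_of_sq_add_sq
    ((add_comm _ _).trans (norm_rsPolyP_sq_add_norm_rsPolyQ_sq hz m))

lemma rsPQ_succ_snd_eq_neg_one_pow_mul_fst {v : ℕ} (hv : v < 2 ^ (m + 1)) :
    (rsPQ (m + 1)).2 v = (-1) ^ (v / 2 ^ m) * (rsPQ (m + 1)).1 v := by
  rcases lt_or_ge v (2 ^ m) with hlt | hge
  · rw [Nat.div_eq_of_lt hlt, rsPQ_succ_fst_of_lt hlt, rsPQ_succ_snd_of_lt hlt, pow_zero, one_mul]
  · obtain ⟨k, rfl⟩ := Nat.exists_eq_add_of_le hge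
    have hdiv : (2 ^ m + k) / 2 ^ m = 1 := by
      rw [pow_succ] at hv
      rw [Nat.div_eq_iff (by positivity)]
      omega
    rw [hdiv, rsPQ_succ_fst_add, rsPQ_succ_snd_add, pow_one, neg_one_mul]

lemma rsPQ_succ_fst_eq_neg_one_pow_mul_snd {v : ℕ} (hv : v < 2 ^ (m + 1)) :
    (rsPQ (m + 1)).1 v = (-1) ^ (v / 2 ^ m) * (rsPQ (m + 1)).2 v := by
  rw [rsPQ_succ_snd_eq_neg_one_pow_mul_fst hv, ← mul_assoc, ← mul_pow, neg_one_mul, neg_neg,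
    one_pow, one_mul]

def IsRSBlock (m : ℕ) (a : ℕ → ℤ) : Prop :=
  ∃ ε : ℤ, (ε = 1 ∨ ε = -1) ∧
    ((∀ v < 2 ^ m, a v = ε * (rsPQ m).1 v) ∨ (∀ v < 2 ^ m, a v = ε * (rsPQ m).2 v))

lemma IsRSBlock.congr {a b : ℕ → ℤ} (ha : IsRSBlock m a) (hab : ∀ v < 2 ^ m, b v = a v) :
    IsRSBlock m b := by
  obtain ⟨ε, hε, hP | hQ⟩ := ha
  · exact ⟨ε, hε, Or.inl fun v hv => (hab v hv).trans (hP v hv)⟩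
  · exact ⟨ε, hε, Or.inr fun v hv => (hab v hv).trans (hQ v hv)⟩

lemma IsRSBlock.neg {a : ℕ → ℤ} (ha : IsRSBlock m a) : IsRSBlock m (fun v => -a v) := by
  obtain ⟨ε, hε, hPQ⟩ := ha
  refine ⟨-ε, by rcases hε with rfl | rfl <;> simp, ?_⟩
  rcases hPQ with hP | hQ
  · exact Or.inl fun v hv => by simp only [hP v hv, neg_mul]
  · exact Or.inr fun v hv => by simp only [hQ v hv, neg_mul]

theorem isRSBlock_rsPQ (m : ℕ) {e t : ℕ} (ht : t < 2 ^ e) :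
    IsRSBlock m (fun v => (rsPQ (m + e)).1 (t * 2 ^ m + v)) ∧
      IsRSBlock m (fun v => (rsPQ (m + e)).2 (t * 2 ^ m + v)) := by
  induction e generalizing t with
  | zero =>
    obtain rfl : t = 0 := by simpa using ht
    exact ⟨⟨1, Or.inl rfl, Or.inl fun v _ => by simp⟩, ⟨1, Or.inl rfl, Or.inr fun v _ => by simp⟩⟩
  | succ e ih =>
    rw [← add_assoc]
    rcases lt_or_ge t (2 ^ e) with hlt | hge
    · have hidx : ∀ v < 2 ^ m, t * 2 ^ m + v < 2 ^ (m + e) := fun v hv =>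
        calc t * 2 ^ m + v < (t + 1) * 2 ^ m := by linarith
          _ ≤ 2 ^ e * 2 ^ m := Nat.mul_le_mul_right _ hlt
          _ = 2 ^ (m + e) := by rw [pow_add, mul_comm]
      exact ⟨(ih hlt).1.congr fun v hv => rsPQ_succ_fst_of_lt (hidx v hv),
        (ih hlt).1.congr fun v hv => rsPQ_succ_snd_of_lt (hidx v hv)⟩
    · obtain ⟨t', rfl⟩ := Nat.exists_eq_add_of_le hge
      have ht' : t' < 2 ^ e := by rw [pow_succ] at ht; omega
      have hidx : ∀ v, (2 ^ e + t') * 2 ^ m + v = 2 ^ (m + e) + (t' * 2 ^ m + v) := fun v => by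
        rw [pow_add]; ring
      exact ⟨(ih ht').2.congr fun v _ => by rw [hidx, rsPQ_succ_fst_add],
        (ih ht').2.neg.congr fun v _ => by rw [hidx, rsPQ_succ_snd_add]⟩

lemma norm_intCast_of_eq_one_or_eq_neg_one {ε : ℤ} (hε : ε = 1 ∨ ε = -1) : ‖(ε : ℂ)‖ = 1 := by
  rcases hε with rfl | rfl <;> simp

theorem IsRSBlock.norm_sum_neg_one_pow_mul_le {a : ℕ → ℤ} (ha : IsRSBlock (m + 1) a) {z : ℂ}
    (hz : ‖z‖ = 1) :
    ‖∑ v ∈ range (2 ^ (m + 1)), (a v : ℂ) * (-1) ^ (v / 2 ^ m) * z ^ v‖ ≤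
      Real.sqrt 2 ^ (m + 2) := by
  obtain ⟨ε, hε, hP | hQ⟩ := ha
  · have hsum : ∑ v ∈ range (2 ^ (m + 1)), (a v : ℂ) * (-1) ^ (v / 2 ^ m) * z ^ v =
        ε * rsPolyQ (m + 1) z := by
      rw [rsPolyQ, mul_sum]
      refine sum_congr rfl fun v hv => ?_
      rw [hP v (mem_range.mp hv), rsPQ_succ_snd_eq_neg_one_pow_mul_fst (mem_range.mp hv)]
      push_cast; ring
    rw [hsum, norm_mul, norm_intCast_of_eq_one_or_eq_neg_one hε, one_mul]
    exact norm_rsPolyQ_le hz _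
  · have hsum : ∑ v ∈ range (2 ^ (m + 1)), (a v : ℂ) * (-1) ^ (v / 2 ^ m) * z ^ v =
        ε * rsPolyP (m + 1) z := by
      rw [rsPolyP, mul_sum]
      refine sum_congr rfl fun v hv => ?_
      rw [hQ v (mem_range.mp hv), rsPQ_succ_fst_eq_neg_one_pow_mul_snd (mem_range.mp hv)]
      push_cast; ring
    rw [hsum, norm_mul, norm_intCast_of_eq_one_or_eq_neg_one hε, one_mul]
    exact norm_rsPolyP_le hz _

end RudinShapiro

section Haar

/-- On its block, `(-1) ^ (r / 2 ^ m)` is `1` on the first half and `-1` on the second. -/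
def haarWavelet (m t r : ℕ) : ℝ :=
  if r / 2 ^ (m + 1) = t then (Real.sqrt 2)⁻¹ ^ (m + 1) * (-1) ^ (r / 2 ^ m) else 0

lemma haarWavelet_succ (m t r : ℕ) :
    haarWavelet (m + 1) t r = 1 / Real.sqrt 2 * haarWavelet m t (r / 2) := by
  simp only [haarWavelet, Nat.div_div_eq_div_mul, ← pow_succ']
  split_ifs <;> ring

lemma haarWavelet_of_div_ne {m t r : ℕ} (h : r / 2 ^ (m + 1) ≠ t) : haarWavelet m t r = 0 :=
  if_neg h

lemma haarWavelet_mul_add {m v : ℕ} (t : ℕ) (hv : v < 2 ^ (m + 1)) :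
    haarWavelet m t (t * 2 ^ (m + 1) + v) = (Real.sqrt 2)⁻¹ ^ (m + 1) * (-1) ^ (v / 2 ^ m) := by
  have hblock : (t * 2 ^ (m + 1) + v) / 2 ^ (m + 1) = t := by
    rw [add_comm, mul_comm, Nat.add_mul_div_left _ _ (by positivity), Nat.div_eq_of_lt hv,
      zero_add]
  have hhalf : (t * 2 ^ (m + 1) + v) / 2 ^ m = v / 2 ^ m + 2 * t := by
    rw [pow_succ, add_comm, show t * (2 ^ m * 2) = 2 ^ m * (2 * t) by ring,
      Nat.add_mul_div_left _ _ (by positivity)]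
  rw [haarWavelet, if_pos hblock, hhalf, pow_add (-1 : ℝ), pow_mul, neg_one_sq, one_pow, mul_one]

lemma haarT_zero_right (d r : ℕ) : haarT d r 0 = (Real.sqrt 2)⁻¹ ^ d := by
  induction d generalizing r with
  | zero => rfl
  | succ d ih => rw [haarT, if_pos (by positivity), ih, pow_succ, one_div, mul_comm]

theorem haarT_eq_haarWavelet {d k : ℕ} (hk0 : 0 < k) (hk : k < 2 ^ d) :
    ∃ m e t, d = m + 1 + e ∧ t < 2 ^ e ∧ ∀ r, haarT d r k = haarWavelet m t r := by
  induction d with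
  | zero => omega
  | succ d ih =>
    by_cases hkd : k < 2 ^ d
    · obtain ⟨m, e, t, rfl, ht, hψ⟩ := ih hkd
      refine ⟨m + 1, e, t, by ring, ht, fun r => ?_⟩
      rw [haarT, if_pos hkd, hψ, haarWavelet_succ]
    · rw [pow_succ] at hk
      refine ⟨0, d, k - 2 ^ d, by ring, by omega, fun r => ?_⟩
      simp [haarT, haarWavelet, hkd, neg_one_pow_eq_ite, Nat.even_iff]

end Haar

lemma inv_sqrt_two_pow_mul_sqrt_two_pow_succ (l : ℕ) :
    (Real.sqrt 2)⁻¹ ^ l * Real.sqrt 2 ^ (l + 1) = Real.sqrt 2 := by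
  rw [pow_succ, ← mul_assoc, ← mul_pow, inv_mul_cancel₀ (by positivity), one_pow, one_mul]

lemma norm_sum_rsPQ_mul_haarWavelet_le {m e t : ℕ} (ht : t < 2 ^ e) {z : ℂ} (hz : ‖z‖ = 1) :
    ‖∑ u ∈ range (2 ^ (m + 1 + e)),
        ((rsPQ (m + 1 + e)).1 u : ℂ) * (haarWavelet m t u : ℂ) * z ^ u‖ ≤ Real.sqrt 2 := by
  have hblock : (t + 1) * 2 ^ (m + 1) ≤ 2 ^ (m + 1 + e) := by
    rw [pow_add 2 (m + 1) e, mul_comm (t + 1)]; exact Nat.mul_le_mul_left _ ht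
  rw [sum_range_eq_sum_block (by positivity) hblock
    fun u hu => by rw [haarWavelet_of_div_ne hu]; simp]
  have hsum : ∑ v ∈ range (2 ^ (m + 1)), ((rsPQ (m + 1 + e)).1 (t * 2 ^ (m + 1) + v) : ℂ) *
        (haarWavelet m t (t * 2 ^ (m + 1) + v) : ℂ) * z ^ (t * 2 ^ (m + 1) + v) =
      ((Real.sqrt 2)⁻¹ ^ (m + 1) : ℝ) * z ^ (t * 2 ^ (m + 1)) *
        ∑ v ∈ range (2 ^ (m + 1)),
          ((rsPQ (m + 1 + e)).1 (t * 2 ^ (m + 1) + v) : ℂ) * (-1) ^ (v / 2 ^ m) * z ^ v := by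
    rw [mul_sum]
    refine sum_congr rfl fun v hv => ?_
    rw [haarWavelet_mul_add t (mem_range.mp hv), pow_add]
    push_cast; ring
  rw [hsum, norm_mul, norm_mul, norm_pow, hz, one_pow, mul_one, Complex.norm_real,
    Real.norm_of_nonneg (by positivity)]
  exact (mul_le_mul_of_nonneg_left ((isRSBlock_rsPQ (m + 1) ht).1.norm_sum_neg_one_pow_mul_le hz)
    (by positivity)).trans_eq (inv_sqrt_two_pow_mul_sqrt_two_pow_succ (m + 1))

lemma norm_sum_rsPQ_mul_haarT_zero_le {d : ℕ} {z : ℂ} (hz : ‖z‖ = 1) :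
    ‖∑ u ∈ range (2 ^ d), ((rsPQ d).1 u : ℂ) * (haarT d u 0 : ℂ) * z ^ u‖ ≤ Real.sqrt 2 := by
  have hsum : ∑ u ∈ range (2 ^ d), ((rsPQ d).1 u : ℂ) * (haarT d u 0 : ℂ) * z ^ u =
      ((Real.sqrt 2)⁻¹ ^ d : ℝ) * rsPolyP d z := by
    rw [rsPolyP, mul_sum]
    exact sum_congr rfl fun u _ => by rw [haarT_zero_right]; ring
  rw [hsum, norm_mul, Complex.norm_real, Real.norm_of_nonneg (by positivity)]
  exact (mul_le_mul_of_nonneg_left (norm_rsPolyP_le hz d) (by positivity)).trans_eq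
    (inv_sqrt_two_pow_mul_sqrt_two_pow_succ d)

theorem norm_sum_rsPQ_mul_haarT_le {d k : ℕ} (hk : k < 2 ^ d) {z : ℂ} (hz : ‖z‖ = 1) :
    ‖∑ u ∈ range (2 ^ d), ((rsPQ d).1 u : ℂ) * (haarT d u k : ℂ) * z ^ u‖ ≤ Real.sqrt 2 := by
  rcases Nat.eq_zero_or_pos k with rfl | hk0
  · exact norm_sum_rsPQ_mul_haarT_zero_le hz
  obtain ⟨m, e, t, rfl, ht, hψ⟩ := haarT_eq_haarWavelet hk0 hk
  simpa only [hψ] using norm_sum_rsPQ_mul_haarWavelet_le ht hz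

lemma DFT_mul_diagonal_mul_apply {n : ℕ} (a : Fin n → ℂ) (B : Matrix (Fin n) (Fin n) ℂ)
    (j k : Fin n) :
    (DFT n * diagonal a * B) j k = ((1 / Real.sqrt n : ℝ) : ℂ) * ∑ u : Fin n,
      a u * B u k * Complex.exp (-2 * Real.pi * Complex.I * (j : ℕ) / n) ^ (u : ℕ) := by
  rw [mul_apply, mul_sum]
  refine sum_congr rfl fun u _ => ?_
  rw [mul_diagonal]
  simp only [DFT, ← Complex.exp_nat_mul]
  ring_nf

lemma norm_exp_neg_two_pi_I_mul_div (j n : ℕ) :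
    ‖Complex.exp (-2 * Real.pi * Complex.I * j / n)‖ = 1 := by
  rw [show -2 * Real.pi * Complex.I * j / n = ((-2 * Real.pi * j / n : ℝ) : ℂ) * Complex.I by
    push_cast; ring]
  exact Complex.norm_exp_ofReal_mul_I _

/-- coherence bound `μ(F Λ W*) ≤ √(2/n)` for the Rudin–Shapiro Golay
modulation `Λ` and the Haar wavelet matrix `W*`, `n = 2^d`. -/
theorem rudin_shapiro_coherence_haar (d : ℕ) :
    ∀ (j k : Fin (2 ^ d)),
      ‖(DFT (2 ^ d) *
        Matrix.diagonal (fun i : Fin (2 ^ d) => ((rudinShapiro d (i : ℕ) : ℤ) : ℂ)) *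
        haarMatrix d) j k‖
      ≤ Real.sqrt (2 / (2 ^ d : ℕ)) := by
  intro j k
  set z := Complex.exp (-2 * Real.pi * Complex.I * (j : ℕ) / (2 ^ d : ℕ))
  have hcol := norm_sum_rsPQ_mul_haarT_le k.isLt (norm_exp_neg_two_pi_I_mul_div j (2 ^ d))
  have hscale : Real.sqrt (2 / (2 ^ d : ℕ)) = 1 / Real.sqrt (2 ^ d : ℕ) * Real.sqrt 2 := by
    rw [Real.sqrt_div zero_le_two]; ring
  rw [DFT_mul_diagonal_mul_apply, norm_mul, Complex.norm_real,
    Real.norm_of_nonneg (by positivity), hscale]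
  simp only [rudinShapiro, haarMatrix]
  rw [Fin.sum_univ_eq_sum_range (fun u => ((rsPQ d).1 u : ℂ) * (haarT d u k : ℂ) * z ^ u)]
  exact mul_le_mul_of_nonneg_left hcol (by positivity)

end
end
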